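/- Let K be a field and I ⊂ K[x_1,...,x_n] an ideal. Then dim_K K[x]_⟨x⟩ / I·K[x]_⟨x⟩ < ∞ if and only if dim_K K[[x]] / I·K[[x]] < ∞, and in that case the two dimensions are equal. -/

import Mathlib

open MvPolynomial

/-- the maximal ideal generated by the variables -/
noncomputable abbrev mxId (K : Type*) [Field K] (n : ℕ) : Ideal (MvPolynomial (Fin n) K) :=
  Ideal.span (Set.range X)

theorem mxId_eq_ker (K : Type*) [Field K] (n : ℕ) :
    mxId K n = RingHom.ker (constantCoeff (σ := Fin n) (R := K)) := by
  ext x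
  show x ∈ Ideal.span (Set.range (X : Fin n → MvPolynomial (Fin n) K)) ↔ _
  rw [← Set.image_univ, mem_ideal_span_X_image]
  simp only [RingHom.mem_ker, constantCoeff_eq, Set.mem_univ, true_and]
  constructor
  · intro h
    by_contra hc
    obtain ⟨i, hi⟩ := h 0 (by simpa [mem_support_iff] using hc)
    simp at hi
  · intro h m hm
    by_contra hc
    push_neg at hc
    have : m = 0 := by ext i; simpa using hc i
    rw [mem_support_iff] at hm
    exact hm (this ▸ h)

instance (K : Type*) [Field K] (n : ℕ) : (mxId K n).IsPrime :=
  mxId_eq_ker K n ▸ RingHom.ker_isPrime _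

/-- the localization `K[x]_⟨x⟩` -/
abbrev LocX (K : Type*) [Field K] (n : ℕ) := Localization.AtPrime (mxId K n)

namespace Aux
variable {K : Type*} [Field K] {n : ℕ}

/-- total degree of a monomial exponent -/
abbrev dg (d : Fin n →₀ ℕ) : ℕ := ∑ i, d i

lemma dg_add (d e : Fin n →₀ ℕ) : dg (d + e) = dg d + dg e := by
  simp [dg, Finsupp.add_apply, Finset.sum_add_distrib]

lemma dg_eq_zero {d : Fin n →₀ ℕ} (h : dg d = 0) : d = 0 := by
  ext i
  have := Finset.sum_eq_zero_iff.mp h i (Finset.mem_univ i)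
  simpa using this

lemma dg_single (i : Fin n) : dg (Finsupp.single i 1) = 1 := by
  simp [dg, Finsupp.single_apply]

lemma X_mem_mxId (i : Fin n) : (X i : MvPolynomial (Fin n) K) ∈ mxId K n :=
  Ideal.subset_span ⟨i, rfl⟩

lemma prod_X_pow_mem (d : Fin n →₀ ℕ) (s : Finset (Fin n)) :
    (∏ i ∈ s, (X i : MvPolynomial (Fin n) K) ^ d i) ∈ (mxId K n) ^ (∑ i ∈ s, d i) := by
  classical
  induction s using Finset.induction_on with
  | empty => simp [Ideal.one_eq_top]
  | @insert a s' ha ih =>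
      rw [Finset.prod_insert ha, Finset.sum_insert ha, pow_add]
      exact Ideal.mul_mem_mul (Ideal.pow_mem_pow (X_mem_mxId a) _) ih

lemma monomial_mem_pow {d : Fin n →₀ ℕ} (c : K) {k : ℕ} (h : k ≤ dg d) :
    (monomial d c : MvPolynomial (Fin n) K) ∈ (mxId K n) ^ k := by
  have h1 : (monomial d c : MvPolynomial (Fin n) K) = C c * ∏ i, (X i) ^ d i := by
    rw [monomial_eq]
    congr 1
    exact Finsupp.prod_fintype _ _ (fun i => pow_zero _)
  rw [h1]
  exact Ideal.mul_mem_left _ _ (Ideal.pow_le_pow_right h (prod_X_pow_mem d Finset.univ))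

lemma mem_pow_of_vanish {p : MvPolynomial (Fin n) K} {k : ℕ}
    (h : ∀ d : Fin n →₀ ℕ, dg d < k → coeff d p = 0) : p ∈ (mxId K n) ^ k := by
  rw [p.as_sum]
  refine Ideal.sum_mem _ (fun d hd => monomial_mem_pow _ ?_)
  by_contra hc
  exact (mem_support_iff.mp hd) (h d (by omega))

end Aux
namespace Aux
variable {K : Type*} [Field K] {n : ℕ}

/-- the ideal of power series whose coefficients vanish below total degree `k` -/
def V (K : Type*) [Field K] (n k : ℕ) : Ideal (MvPowerSeries (Fin n) K) where
  carrier := {f | ∀ d : Fin n →₀ ℕ, dg d < k → MvPowerSeries.coeff d f = 0}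
  add_mem' := by intro a b ha hb d hd; simp [map_add, ha d hd, hb d hd]
  zero_mem' := by intro d hd; simp
  smul_mem' := by
    intro c f hf d hd
    rw [smul_eq_mul, MvPowerSeries.coeff_mul]
    refine Finset.sum_eq_zero (fun p hp => ?_)
    rw [Finset.HasAntidiagonal.mem_antidiagonal] at hp
    have : dg p.2 < k := by
      have := dg_add p.1 p.2
      rw [hp] at this
      omega
    rw [hf p.2 this, mul_zero]

lemma mem_V (k : ℕ) (f : MvPowerSeries (Fin n) K) :
    f ∈ V K n k ↔ ∀ d : Fin n →₀ ℕ, dg d < k → MvPowerSeries.coeff d f = 0 := Iff.rfl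

/-- the extension of `mxId` to the power series ring -/
noncomputable abbrev JP (K : Type*) [Field K] (n : ℕ) : Ideal (MvPowerSeries (Fin n) K) :=
  (mxId K n).map coeToMvPowerSeries.ringHom

lemma X_mem_JP (i : Fin n) : (MvPowerSeries.X i : MvPowerSeries (Fin n) K) ∈ JP K n := by
  rw [← MvPolynomial.coe_X (R := K) i]
  exact Ideal.mem_map_of_mem _ (X_mem_mxId i)

lemma V_mul_le (a b : ℕ) : V K n a * V K n b ≤ V K n (a + b) := by
  rw [Ideal.mul_le]
  intro f hf g hg d hd
  rw [MvPowerSeries.coeff_mul]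
  refine Finset.sum_eq_zero (fun p hp => ?_)
  rw [Finset.HasAntidiagonal.mem_antidiagonal] at hp
  have hsum : dg p.1 + dg p.2 = dg d := by rw [← dg_add, hp]
  rcases lt_or_ge (dg p.1) a with h1 | h1
  · rw [hf p.1 h1, zero_mul]
  · rw [hg p.2 (by omega), mul_zero]

lemma JP_pow_le_V (k : ℕ) : (JP K n) ^ k ≤ V K n k := by
  induction k with
  | zero => intro f _ d hd; omega
  | succ k ih =>
      have hJ : JP K n ≤ V K n 1 := by
        rw [JP, mxId, Ideal.map_span, Ideal.span_le]
        rintro _ ⟨_, ⟨i, rfl⟩, rfl⟩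
        intro d hd
        have hd0 : d = 0 := dg_eq_zero (by omega)
        subst hd0
        rw [coeToMvPowerSeries.ringHom_apply, MvPolynomial.coe_X, MvPowerSeries.coeff_X, if_neg]
        intro h
        have h1 := dg_single (n := n) i
        rw [← h] at h1
        simp [dg] at h1
      calc (JP K n) ^ (k+1) = (JP K n)^k * JP K n := pow_succ _ _
        _ ≤ V K n k * V K n 1 := Ideal.mul_mono ih hJ
        _ ≤ V K n (k + 1) := V_mul_le k 1

end Aux
namespace Aux
variable {K : Type*} [Field K] {n : ℕ}

lemma V_le_JP_pow : ∀ k, V K n k ≤ (JP K n) ^ k := by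
  intro k
  induction k with
  | zero => exact fun f _ => by simpa [pow_zero, Ideal.one_eq_top] using Submodule.mem_top
  | succ k ih =>
    intro f hf
    classical
    set g : Fin n → MvPowerSeries (Fin n) K := fun i d =>
      if ∀ j < i, d j = 0 then MvPowerSeries.coeff (d + Finsupp.single i 1) f else 0 with hgdef
    have hg : ∀ i, g i ∈ V K n k := by
      intro i d hd
      rw [MvPowerSeries.coeff_apply, hgdef]
      dsimp only
      split
      · refine hf _ ?_
        rw [dg_add, dg_single]
        omega
      · rfl
    have hcoeff : ∀ (i : Fin n) (u : Fin n →₀ ℕ),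
        MvPowerSeries.coeff u (MvPowerSeries.X i * g i) =
          if u i ≠ 0 ∧ ∀ j < i, u j = 0 then MvPowerSeries.coeff u f else 0 := by
      intro i u
      rw [MvPowerSeries.X_def, MvPowerSeries.coeff_monomial_mul]
      by_cases hle : Finsupp.single i 1 ≤ u
      · rw [if_pos hle, one_mul, MvPowerSeries.coeff_apply, hgdef]
        dsimp only
        have hui : u i ≠ 0 := by
          have := Finsupp.single_le_iff.mp hle
          omega
        have hsub : ∀ j, j < i → (u - Finsupp.single i 1 : Fin n →₀ ℕ) j = u j := by
          intro j hj
          rw [Finsupp.tsub_apply, Finsupp.single_apply, if_neg (by exact fun h => absurd h (by omega)), Nat.sub_zero]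
        have hadd : u - Finsupp.single i 1 + Finsupp.single i 1 = u := tsub_add_cancel_of_le hle
        by_cases hcond : ∀ j < i, u j = 0
        · rw [if_pos (by intro j hj; rw [hsub j hj]; exact hcond j hj), hadd,
            if_pos ⟨hui, hcond⟩]
        · rw [if_neg (by intro hc; exact hcond (fun j hj => by rw [← hsub j hj]; exact hc j hj)),
            if_neg (by rintro ⟨-, h2⟩; exact hcond h2)]
      · rw [if_neg hle, eq_comm, if_neg]
        rintro ⟨h1, -⟩
        exact hle (Finsupp.single_le_iff.mpr (by omega))
    have hdecomp : f = ∑ i, MvPowerSeries.X i * g i := by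
      ext u
      rw [map_sum]
      simp_rw [hcoeff]
      by_cases hu : u = 0
      · subst hu
        rw [Finset.sum_eq_zero (fun i _ => by rw [if_neg]; rintro ⟨h1, -⟩; exact h1 rfl)]
        exact hf 0 (by simp [dg])
      · have hne : u.support.Nonempty := Finsupp.support_nonempty_iff.mpr hu
        set i₀ := u.support.min' hne with hi₀
        have h1 : u i₀ ≠ 0 := Finsupp.mem_support_iff.mp (u.support.min'_mem hne)
        have h2 : ∀ j < i₀, u j = 0 := by
          intro j hj
          by_contra hc
          have : i₀ ≤ j := u.support.min'_le j (Finsupp.mem_support_iff.mpr hc)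
          omega
        have hz : ∀ i ∈ Finset.univ, i ≠ i₀ →
            (if u i ≠ 0 ∧ ∀ j < i, u j = 0 then MvPowerSeries.coeff u f else 0) = 0 := by
          intro i _ hi
          rw [if_neg]
          rintro ⟨hne1, hall⟩
          have hmem : i ∈ u.support := Finsupp.mem_support_iff.mpr hne1
          have hle : i₀ ≤ i := u.support.min'_le i hmem
          have hlt : i₀ < i := lt_of_le_of_ne hle (Ne.symm hi)
          exact h1 (hall i₀ hlt)
        rw [Finset.sum_eq_single i₀ hz (fun h => absurd (Finset.mem_univ i₀) h),
          if_pos ⟨h1, h2⟩]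
    rw [hdecomp, pow_succ']
    exact Ideal.sum_mem _ fun i _ => Ideal.mul_mem_mul (X_mem_JP i) (ih (hg i))

end Aux
namespace Aux
variable {K : Type*} [Field K] {n : ℕ}

/-- truncation of a power series below total degree `k`, as a polynomial -/
noncomputable def truncP (k : ℕ) (g : MvPowerSeries (Fin n) K) : MvPolynomial (Fin n) K :=
  ∑ d ∈ (Finset.Iic (Finsupp.equivFunOnFinite.symm (fun _ => k))).filter (fun d => dg d < k),
    monomial d (MvPowerSeries.coeff d g)

lemma coeff_truncP (k : ℕ) (g : MvPowerSeries (Fin n) K) (d : Fin n →₀ ℕ) :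
    MvPolynomial.coeff d (truncP k g) = if dg d < k then MvPowerSeries.coeff d g else 0 := by
  classical
  rw [truncP]
  rw [MvPolynomial.coeff_sum]
  simp_rw [MvPolynomial.coeff_monomial]
  rw [Finset.sum_ite_eq']
  by_cases hd : dg d < k
  · rw [if_pos, if_pos hd]
    rw [Finset.mem_filter]
    refine ⟨Finset.mem_Iic.mpr ?_, hd⟩
    intro i
    simp only [Finsupp.coe_equivFunOnFinite_symm]
    calc d i ≤ dg d := Finset.single_le_sum (fun j _ => Nat.zero_le _) (Finset.mem_univ i)
      _ ≤ k := by omega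
  · rw [if_neg, if_neg hd]
    rw [Finset.mem_filter]
    rintro ⟨-, h⟩
    exact hd h

lemma sub_truncP_mem_V (k : ℕ) (g : MvPowerSeries (Fin n) K) :
    g - (coeToMvPowerSeries.ringHom (truncP k g)) ∈ V K n k := by
  intro d hd
  rw [map_sub, coeToMvPowerSeries.ringHom_apply, MvPolynomial.coeff_coe, coeff_truncP,
    if_pos hd, sub_self]

lemma mem_pow_of_coe_mem_V {c : MvPolynomial (Fin n) K} {k : ℕ}
    (h : coeToMvPowerSeries.ringHom c ∈ V K n k) : c ∈ (mxId K n) ^ k := by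
  refine mem_pow_of_vanish (fun d hd => ?_)
  have := h d hd
  rwa [coeToMvPowerSeries.ringHom_apply, MvPolynomial.coeff_coe] at this

lemma comap_map_coe_le (I : Ideal (MvPolynomial (Fin n) K)) (k : ℕ) :
    (I.map coeToMvPowerSeries.ringHom).comap
      (coeToMvPowerSeries.ringHom (σ := Fin n) (R := K)) ≤ I ⊔ (mxId K n) ^ k := by
  intro a ha
  rw [Ideal.mem_comap] at ha
  have key : ∀ z ∈ I.map (coeToMvPowerSeries.ringHom (σ := Fin n) (R := K)),
      ∃ b ∈ I, z - coeToMvPowerSeries.ringHom b ∈ V K n k := by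
    intro z hz
    rw [Ideal.map] at hz
    induction hz using Submodule.span_induction with
    | mem z hzmem =>
        obtain ⟨b, hb, rfl⟩ := hzmem
        exact ⟨b, hb, by rw [sub_self]; exact (V K n k).zero_mem⟩
    | zero => exact ⟨0, I.zero_mem, by rw [map_zero, sub_self]; exact (V K n k).zero_mem⟩
    | add z w _ _ hz hw =>
        obtain ⟨b, hb, hbv⟩ := hz
        obtain ⟨c, hc, hcv⟩ := hw
        refine ⟨b + c, I.add_mem hb hc, ?_⟩
        rw [map_add]
        have : z + w - (coeToMvPowerSeries.ringHom b + coeToMvPowerSeries.ringHom c)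
            = (z - coeToMvPowerSeries.ringHom b) + (w - coeToMvPowerSeries.ringHom c) := by ring
        rw [this]
        exact (V K n k).add_mem hbv hcv
    | smul s z _ hz =>
        obtain ⟨b, hb, hbv⟩ := hz
        refine ⟨truncP k s * b, I.mul_mem_left _ hb, ?_⟩
        have : s • z - coeToMvPowerSeries.ringHom (truncP k s * b)
            = (s - coeToMvPowerSeries.ringHom (truncP k s)) * coeToMvPowerSeries.ringHom b
              + s * (z - coeToMvPowerSeries.ringHom b) := by
          rw [smul_eq_mul, map_mul]; ring
        rw [this]
        exact (V K n k).add_mem ((V K n k).mul_mem_right _ (sub_truncP_mem_V k s))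
          ((V K n k).mul_mem_left _ hbv)
  obtain ⟨b, hb, hbv⟩ := key _ ha
  have hc : a - b ∈ (mxId K n) ^ k := mem_pow_of_coe_mem_V (by rw [map_sub]; exact hbv)
  have : a = b + (a - b) := by ring
  rw [this]
  exact Submodule.add_mem_sup hb hc

end Aux
namespace Aux
variable {K : Type*} [Field K] {n : ℕ}

lemma mxId_isMaximal : (mxId K n).IsMaximal := by
  rw [mxId_eq_ker]
  exact RingHom.ker_isMaximal_of_surjective _ (fun c => ⟨C c, constantCoeff_C _ c⟩)

lemma isUnit_mk (I : Ideal (MvPolynomial (Fin n) K)) (k : ℕ) {s : MvPolynomial (Fin n) K}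
    (hs : s ∉ mxId K n) :
    IsUnit (Ideal.Quotient.mk (I ⊔ (mxId K n) ^ k) s) := by
  by_contra hc
  obtain ⟨M, hM, hsM⟩ := exists_max_ideal_of_mem_nonunits hc
  have hsurj := Ideal.Quotient.mk_surjective (I := I ⊔ (mxId K n) ^ k)
  have hM' : (M.comap (Ideal.Quotient.mk (I ⊔ (mxId K n) ^ k))).IsMaximal :=
    Ideal.comap_isMaximal_of_surjective _ hsurj
  have hpow : (mxId K n) ^ k ≤ M.comap (Ideal.Quotient.mk (I ⊔ (mxId K n) ^ k)) := by
    intro a hha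
    rw [Ideal.mem_comap, Ideal.Quotient.eq_zero_iff_mem.mpr (Ideal.mem_sup_right hha)]
    exact M.zero_mem
  have hm : mxId K n ≤ M.comap (Ideal.Quotient.mk (I ⊔ (mxId K n) ^ k)) :=
    Ideal.IsPrime.le_of_pow_le hpow
  have heq : mxId K n = M.comap (Ideal.Quotient.mk (I ⊔ (mxId K n) ^ k)) :=
    mxId_isMaximal.eq_of_le hM'.ne_top hm
  rw [heq] at hs
  exact hs (Ideal.mem_comap.mpr hsM)

lemma finite_quotient (I : Ideal (MvPolynomial (Fin n) K)) (k : ℕ) :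
    Module.Finite K (MvPolynomial (Fin n) K ⧸ (I ⊔ (mxId K n) ^ k)) := by
  set J := I ⊔ (mxId K n) ^ k
  let f : restrictTotalDegree (Fin n) K k →ₗ[K] MvPolynomial (Fin n) K ⧸ J :=
    (Ideal.Quotient.mkₐ K J).toLinearMap.comp (Submodule.subtype _)
  refine Module.Finite.of_surjective f (fun x => ?_)
  obtain ⟨p, rfl⟩ := Ideal.Quotient.mk_surjective x
  have hmem : truncP k (coeToMvPowerSeries.ringHom p) ∈ restrictTotalDegree (Fin n) K k := by
    rw [mem_restrictTotalDegree, totalDegree]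
    refine Finset.sup_le (fun d hd => ?_)
    rw [mem_support_iff, coeff_truncP] at hd
    have hdk : dg d < k := by
      by_contra hc
      rw [if_neg hc] at hd
      exact hd rfl
    have : (d.sum fun _ e => e) = dg d := Finsupp.sum_fintype _ _ (fun i => rfl)
    omega
  refine ⟨⟨_, hmem⟩, ?_⟩
  show Ideal.Quotient.mk J (truncP k (coeToMvPowerSeries.ringHom p)) = Ideal.Quotient.mk J p
  rw [Ideal.Quotient.mk_eq_mk_iff_sub_mem]
  refine Ideal.mem_sup_right (mem_pow_of_vanish (fun d hd => ?_))
  rw [coeff_sub, coeff_truncP, if_pos hd, coeToMvPowerSeries.ringHom_apply,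
    MvPolynomial.coeff_coe, sub_self]

end Aux
namespace Aux
variable {K : Type*} [Field K] {n : ℕ}

lemma algebraMap_P_eq :
    algebraMap (MvPolynomial (Fin n) K) (MvPowerSeries (Fin n) K)
      = coeToMvPowerSeries.ringHom := RingHom.ext fun _ => rfl

/-- iso between `A/(I + m^k)` and `K[[x]]/I·K[[x]]` -/
noncomputable def equivP (I : Ideal (MvPolynomial (Fin n) K)) (k : ℕ)
    (hk : ((mxId K n) ^ k).map (coeToMvPowerSeries.ringHom (σ := Fin n) (R := K))
      ≤ I.map coeToMvPowerSeries.ringHom) :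
    (MvPolynomial (Fin n) K ⧸ (I ⊔ (mxId K n) ^ k)) ≃ₐ[K]
      (MvPowerSeries (Fin n) K ⧸ I.map (coeToMvPowerSeries.ringHom (σ := Fin n) (R := K))) := by
  set J := I ⊔ (mxId K n) ^ k
  set IP := I.map (coeToMvPowerSeries.ringHom (σ := Fin n) (R := K))
  let φ : MvPolynomial (Fin n) K →ₐ[K] MvPowerSeries (Fin n) K ⧸ IP :=
    (Ideal.Quotient.mkₐ K IP).comp (IsScalarTower.toAlgHom K _ _)
  have hφ : ∀ p, φ p = Ideal.Quotient.mk IP (coeToMvPowerSeries.ringHom p) := fun p => rfl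
  have h0 : ∀ a ∈ J, φ a = 0 := by
    intro a ha
    obtain ⟨b, hb, c, hc, rfl⟩ := Submodule.mem_sup.mp ha
    rw [map_add, hφ, hφ]
    rw [Ideal.Quotient.eq_zero_iff_mem.mpr (Ideal.mem_map_of_mem _ hb),
      Ideal.Quotient.eq_zero_iff_mem.mpr (hk (Ideal.mem_map_of_mem _ hc)), add_zero]
  let ψ := Ideal.Quotient.liftₐ J φ h0
  have hψ : ∀ p, ψ (Ideal.Quotient.mk J p) = Ideal.Quotient.mk IP (coeToMvPowerSeries.ringHom p) :=
    fun p => Ideal.Quotient.liftₐ_apply J φ h0 _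
  refine AlgEquiv.ofBijective ψ ⟨?_, ?_⟩
  · rw [injective_iff_map_eq_zero]
    intro x hx
    obtain ⟨p, rfl⟩ := Ideal.Quotient.mk_surjective x
    rw [hψ, Ideal.Quotient.eq_zero_iff_mem] at hx
    exact Ideal.Quotient.eq_zero_iff_mem.mpr (comap_map_coe_le I k (Ideal.mem_comap.mpr hx))
  · intro y
    obtain ⟨f, rfl⟩ := Ideal.Quotient.mk_surjective y
    refine ⟨Ideal.Quotient.mk J (truncP k f), ?_⟩
    rw [hψ, Ideal.Quotient.mk_eq_mk_iff_sub_mem]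
    have h1 : coeToMvPowerSeries.ringHom (truncP k f) - f ∈ V K n k := by
      have := sub_truncP_mem_V k f
      have h2 := (V K n k).neg_mem this
      rwa [neg_sub] at h2
    have h3 : V K n k ≤ IP := by
      refine le_trans (V_le_JP_pow k) ?_
      rw [← Ideal.map_pow]
      exact hk
    exact h3 h1

set_option maxHeartbeats 1000000 in
/-- iso between `A/(I + m^k)` and `K[x]_⟨x⟩/I·K[x]_⟨x⟩` -/
noncomputable def equivL (I : Ideal (MvPolynomial (Fin n) K)) (k : ℕ)
    (hk : ((mxId K n) ^ k).map (algebraMap (MvPolynomial (Fin n) K) (LocX K n))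
      ≤ I.map (algebraMap (MvPolynomial (Fin n) K) (LocX K n))) :
    (MvPolynomial (Fin n) K ⧸ (I ⊔ (mxId K n) ^ k)) ≃ₐ[K]
      (LocX K n ⧸ I.map (algebraMap (MvPolynomial (Fin n) K) (LocX K n))) := by
  set J := I ⊔ (mxId K n) ^ k with hJdef
  set Ie := I.map (algebraMap (MvPolynomial (Fin n) K) (LocX K n)) with hIedef
  let φ : MvPolynomial (Fin n) K →ₐ[K] LocX K n ⧸ Ie :=
    (Ideal.Quotient.mkₐ K Ie).comp (IsScalarTower.toAlgHom K _ _)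
  have hφ : ∀ p, φ p = Ideal.Quotient.mk Ie (algebraMap _ _ p) := fun p => rfl
  have h0 : ∀ a ∈ J, φ a = 0 := by
    intro a ha
    obtain ⟨b, hb, c, hc, rfl⟩ := Submodule.mem_sup.mp ha
    rw [map_add, hφ, hφ]
    rw [Ideal.Quotient.eq_zero_iff_mem.mpr (Ideal.mem_map_of_mem _ hb),
      Ideal.Quotient.eq_zero_iff_mem.mpr (hk (Ideal.mem_map_of_mem _ hc)), add_zero]
  let ψ := Ideal.Quotient.liftₐ J φ h0
  have hψ : ∀ p, ψ (Ideal.Quotient.mk J p) = Ideal.Quotient.mk Ie (algebraMap _ _ p) :=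
    fun p => Ideal.Quotient.liftₐ_apply J φ h0 _
  refine AlgEquiv.ofBijective ψ ⟨?_, ?_⟩
  · rw [injective_iff_map_eq_zero]
    intro x hx
    obtain ⟨p, rfl⟩ := Ideal.Quotient.mk_surjective x
    rw [hψ, Ideal.Quotient.eq_zero_iff_mem] at hx
    obtain ⟨⟨b, s⟩, hbs⟩ := (IsLocalization.mem_map_algebraMap_iff (mxId K n).primeCompl _).mp hx
    have hinj : Function.Injective (algebraMap (MvPolynomial (Fin n) K) (LocX K n)) :=
      IsLocalization.injective _ ((mxId K n).primeCompl_le_nonZeroDivisors)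
    have heq : p * (s : MvPolynomial (Fin n) K) = b := by
      apply hinj
      rw [map_mul]
      exact hbs
    have hmem : p * (s : MvPolynomial (Fin n) K) ∈ I := heq ▸ b.2
    have hu := isUnit_mk I k s.2
    rw [Ideal.Quotient.eq_zero_iff_mem]
    have hz : Ideal.Quotient.mk J p * Ideal.Quotient.mk J (s : MvPolynomial (Fin n) K) = 0 := by
      rw [← map_mul, Ideal.Quotient.eq_zero_iff_mem]
      exact Ideal.mem_sup_left hmem
    rw [← Ideal.Quotient.eq_zero_iff_mem]
    exact (hu.mul_left_eq_zero).mp hz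
  · intro y
    obtain ⟨w, rfl⟩ := Ideal.Quotient.mk_surjective y
    obtain ⟨⟨a, s⟩, hw⟩ := IsLocalization.mk'_surjective (mxId K n).primeCompl w
    have hu := isUnit_mk I k s.2
    obtain ⟨u, hu_eq⟩ := hu
    obtain ⟨t, ht⟩ := Ideal.Quotient.mk_surjective (u⁻¹ : (MvPolynomial (Fin n) K ⧸ J)ˣ).val
    have hst : (s : MvPolynomial (Fin n) K) * t - 1 ∈ J := by
      rw [← Ideal.Quotient.eq_zero_iff_mem, map_sub, map_one, map_mul, ← hu_eq, ht]
      rw [u.mul_inv]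
      ring
    refine ⟨Ideal.Quotient.mk J (a * t), ?_⟩
    rw [hψ, Ideal.Quotient.mk_eq_mk_iff_sub_mem]
    have hspec : w * algebraMap (MvPolynomial (Fin n) K) (LocX K n) s
        = algebraMap (MvPolynomial (Fin n) K) (LocX K n) a := by
      rw [← hw]; exact IsLocalization.mk'_spec _ a s
    have hkey : algebraMap (MvPolynomial (Fin n) K) (LocX K n) (a * t) - w
        = w * algebraMap (MvPolynomial (Fin n) K) (LocX K n)
            ((s : MvPolynomial (Fin n) K) * t - 1) := by
      have h5 : algebraMap (MvPolynomial (Fin n) K) (LocX K n) (a * t)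
          = w * algebraMap (MvPolynomial (Fin n) K) (LocX K n)
              ((s : MvPolynomial (Fin n) K) * t) := by
        rw [map_mul, map_mul, ← hspec]; ring
      rw [h5, map_sub, map_one, mul_sub, mul_one]
    rw [hkey]
    refine Ie.mul_mem_left _ ?_
    have : ((s : MvPolynomial (Fin n) K) * t - 1) ∈ J := hst
    obtain ⟨b, hb, c, hc, hbc⟩ := Submodule.mem_sup.mp this
    rw [← hbc, map_add]
    exact Ie.add_mem (Ideal.mem_map_of_mem _ hb) (hk (Ideal.mem_map_of_mem _ hc))

end Aux
namespace Aux
variable {K : Type*} [Field K] {n : ℕ}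

/-- if the image of the ring under a hom from the polynomial ring is artinian and the
variables land in all maximal ideals, then the extension of `mxId` is nilpotent -/
lemma exists_pow_le_ker {B : Type*} [CommRing B] [IsArtinianRing B]
    (f : MvPolynomial (Fin n) K →+* B)
    (hX : ∀ i : Fin n, ∀ M : Ideal B, M.IsMaximal → f (X i) ∈ M) :
    ∃ k, ((mxId K n).map f) ^ k = ⊥ := by
  obtain ⟨k, hk⟩ := IsArtinianRing.isNilpotent_jacobson_bot (R := B)
  refine ⟨k, le_bot_iff.mp ?_⟩
  have hle : (mxId K n).map f ≤ Ideal.jacobson ⊥ := by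
    rw [mxId, Ideal.map_span, Ideal.span_le]
    rintro _ ⟨_, ⟨i, rfl⟩, rfl⟩
    rw [SetLike.mem_coe, Ideal.jacobson, Ideal.mem_sInf]
    rintro J ⟨-, hJ⟩
    exact hX i J hJ
  calc ((mxId K n).map f) ^ k ≤ (Ideal.jacobson ⊥) ^ k := Ideal.pow_right_mono hle k
    _ = ⊥ := hk

lemma finiteDimensional_isArtinian {B : Type*} [CommRing B] [Algebra K B]
    (h : FiniteDimensional K B) : IsArtinianRing B :=
  isArtinian_of_tower K (inferInstanceAs (IsArtinian K B))

/-- from finite dimensionality of the local quotient, get a power of `mxId` inside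
the extended ideal -/
lemma exists_pow_map_le {S : Type*} [CommRing S] [IsLocalRing S] [Algebra K S]
    (g : MvPolynomial (Fin n) K →+* S)
    (hg : ∀ i : Fin n, ¬ IsUnit (g (X i)))
    (I : Ideal (MvPolynomial (Fin n) K))
    (h : FiniteDimensional K (S ⧸ I.map g)) :
    ∃ k, ((mxId K n) ^ k).map g ≤ I.map g := by
  have hart : IsArtinianRing (S ⧸ I.map g) := finiteDimensional_isArtinian h
  have hX : ∀ i : Fin n, ∀ M : Ideal (S ⧸ I.map g), M.IsMaximal →
      (Ideal.Quotient.mk (I.map g)) (g (X i)) ∈ M := by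
    intro i M hM
    have hcm : (M.comap (Ideal.Quotient.mk (I.map g))).IsMaximal :=
      Ideal.comap_isMaximal_of_surjective _ Ideal.Quotient.mk_surjective
    have : M.comap (Ideal.Quotient.mk (I.map g)) = IsLocalRing.maximalIdeal S :=
      IsLocalRing.eq_maximalIdeal hcm
    have hmem : g (X i) ∈ M.comap (Ideal.Quotient.mk (I.map g)) := by
      rw [this]
      exact hg i
    exact Ideal.mem_comap.mp hmem
  obtain ⟨k, hk⟩ := exists_pow_le_ker ((Ideal.Quotient.mk (I.map g)).comp g) hX
  refine ⟨k, ?_⟩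
  rw [← Ideal.map_map] at hk
  rw [Ideal.map_pow, ← Ideal.mk_ker (I := I.map g), ← Ideal.map_eq_bot_iff_le_ker,
    Ideal.map_pow]
  exact hk

end Aux
namespace Aux
variable {K : Type*} [Field K] {n : ℕ}

lemma notUnit_X_L (i : Fin n) :
    ¬ IsUnit (algebraMap (MvPolynomial (Fin n) K) (LocX K n) (X i)) := by
  have hmem : algebraMap (MvPolynomial (Fin n) K) (LocX K n) (X i)
      ∈ IsLocalRing.maximalIdeal (LocX K n) := by
    rw [← Localization.AtPrime.map_eq_maximalIdeal]
    exact Ideal.mem_map_of_mem _ (X_mem_mxId i)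
  exact hmem

lemma notUnit_X_P (i : Fin n) :
    ¬ IsUnit (coeToMvPowerSeries.ringHom (R := K) (X i)) := by
  rw [coeToMvPowerSeries.ringHom_apply, MvPolynomial.coe_X,
    MvPowerSeries.isUnit_iff_constantCoeff, MvPowerSeries.constantCoeff_X]
  exact not_isUnit_zero

lemma isUnit_coe_of_primeCompl {s : MvPolynomial (Fin n) K} (hs : s ∉ mxId K n) :
    IsUnit (coeToMvPowerSeries.ringHom (R := K) s) := by
  rw [coeToMvPowerSeries.ringHom_apply, MvPowerSeries.isUnit_iff_constantCoeff]
  have : MvPowerSeries.constantCoeff (↑s : MvPowerSeries (Fin n) K) = constantCoeff s := by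
    rw [← MvPowerSeries.coeff_zero_eq_constantCoeff_apply, MvPolynomial.coeff_coe]
    rfl
  rw [this, isUnit_iff_ne_zero]
  intro hc
  rw [mxId_eq_ker] at hs
  exact hs hc

lemma map_P_le_of_map_L_le (I : Ideal (MvPolynomial (Fin n) K)) (k : ℕ)
    (hk : ((mxId K n) ^ k).map (algebraMap (MvPolynomial (Fin n) K) (LocX K n))
      ≤ I.map (algebraMap (MvPolynomial (Fin n) K) (LocX K n))) :
    ((mxId K n) ^ k).map (coeToMvPowerSeries.ringHom (σ := Fin n) (R := K))
      ≤ I.map coeToMvPowerSeries.ringHom := by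
  rw [Ideal.map_le_iff_le_comap]
  intro a ha
  rw [Ideal.mem_comap]
  have h1 : algebraMap (MvPolynomial (Fin n) K) (LocX K n) a
      ∈ I.map (algebraMap (MvPolynomial (Fin n) K) (LocX K n)) :=
    hk (Ideal.mem_map_of_mem _ ha)
  obtain ⟨⟨b, s⟩, hbs⟩ := (IsLocalization.mem_map_algebraMap_iff (mxId K n).primeCompl _).mp h1
  have hinj : Function.Injective (algebraMap (MvPolynomial (Fin n) K) (LocX K n)) :=
    IsLocalization.injective _ ((mxId K n).primeCompl_le_nonZeroDivisors)
  have heq : a * (s : MvPolynomial (Fin n) K) = b := by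
    apply hinj
    rw [map_mul]
    exact hbs
  obtain ⟨u, hu⟩ := isUnit_coe_of_primeCompl (K := K) s.2
  have h2 : coeToMvPowerSeries.ringHom (R := K) a = coeToMvPowerSeries.ringHom (b : MvPolynomial (Fin n) K) * ↑u⁻¹ := by
    rw [Units.eq_mul_inv_iff_mul_eq, hu, ← map_mul, heq]
  rw [h2]
  exact (I.map coeToMvPowerSeries.ringHom).mul_mem_right _ (Ideal.mem_map_of_mem _ b.2)

lemma map_L_le_of_map_P_le (I : Ideal (MvPolynomial (Fin n) K)) (k : ℕ)
    (hk : ((mxId K n) ^ k).map (coeToMvPowerSeries.ringHom (σ := Fin n) (R := K))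
      ≤ I.map coeToMvPowerSeries.ringHom) :
    ((mxId K n) ^ k).map (algebraMap (MvPolynomial (Fin n) K) (LocX K n))
      ≤ I.map (algebraMap (MvPolynomial (Fin n) K) (LocX K n)) := by
  have step1 : (mxId K n) ^ k ≤ I ⊔ (mxId K n) ^ (k + 1) := fun a ha =>
    comap_map_coe_le I (k+1) (Ideal.mem_comap.mpr (hk (Ideal.mem_map_of_mem _ ha)))
  set N' := ((mxId K n) ^ k).map (algebraMap (MvPolynomial (Fin n) K) (LocX K n)) with hN'
  set N := I.map (algebraMap (MvPolynomial (Fin n) K) (LocX K n)) with hN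
  set mL := (mxId K n).map (algebraMap (MvPolynomial (Fin n) K) (LocX K n)) with hmL
  haveI : IsNoetherianRing (LocX K n) :=
    IsLocalization.isNoetherianRing (mxId K n).primeCompl (LocX K n) inferInstance
  have hFG : N'.FG := (isNoetherian_def.mp inferInstance) N'
  have hIJ : mL ≤ Ideal.jacobson ⊥ := by
    rw [hmL, Localization.AtPrime.map_eq_maximalIdeal]
    exact IsLocalRing.maximalIdeal_le_jacobson ⊥
  have hNN : N' ≤ N ⊔ mL • N' := by
    have h2 : N' ≤ (I ⊔ (mxId K n) ^ (k + 1)).map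
        (algebraMap (MvPolynomial (Fin n) K) (LocX K n)) := Ideal.map_mono step1
    rw [Ideal.map_sup] at h2
    have h3 : ((mxId K n) ^ (k + 1)).map (algebraMap (MvPolynomial (Fin n) K) (LocX K n))
        = mL * N' := by
      rw [hmL, hN', ← Ideal.map_mul, ← pow_succ']
    rw [h3] at h2
    rwa [smul_eq_mul]
  exact Submodule.le_of_le_smul_of_le_jacobson_bot hFG hIJ hNN

end Aux

open Aux

/-- for an ideal `I ⊂ K[x]`, the quotient of the localization
`K[x]_⟨x⟩` by `I` is finite dimensional over `K` iff the quotient of the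
completion `K[[x]]` by `I` is, and then the dimensions agree. -/
theorem finiteDimensional_localization_iff_powerSeries
    (K : Type*) [Field K] (n : ℕ) (I : Ideal (MvPolynomial (Fin n) K)) :
    (FiniteDimensional K
        (LocX K n ⧸ I.map (algebraMap (MvPolynomial (Fin n) K) (LocX K n))) ↔
      FiniteDimensional K (MvPowerSeries (Fin n) K ⧸
        Ideal.span (MvPolynomial.coeToMvPowerSeries.ringHom '' (I : Set (MvPolynomial (Fin n) K))))) ∧
    (FiniteDimensional K
        (LocX K n ⧸ I.map (algebraMap (MvPolynomial (Fin n) K) (LocX K n))) →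
      Module.finrank K
          (LocX K n ⧸ I.map (algebraMap (MvPolynomial (Fin n) K) (LocX K n))) =
        Module.finrank K (MvPowerSeries (Fin n) K ⧸
          Ideal.span (MvPolynomial.coeToMvPowerSeries.ringHom '' (I : Set (MvPolynomial (Fin n) K))))) := by
  have hspan : Ideal.span (MvPolynomial.coeToMvPowerSeries.ringHom '' (I : Set (MvPolynomial (Fin n) K)))
      = I.map (coeToMvPowerSeries.ringHom (σ := Fin n) (R := K)) := rfl
  rw [hspan]
  have dirL : FiniteDimensional K
      (LocX K n ⧸ I.map (algebraMap (MvPolynomial (Fin n) K) (LocX K n))) →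
      ∃ k, ((mxId K n) ^ k).map (algebraMap (MvPolynomial (Fin n) K) (LocX K n))
          ≤ I.map (algebraMap (MvPolynomial (Fin n) K) (LocX K n))
        ∧ ((mxId K n) ^ k).map (coeToMvPowerSeries.ringHom (σ := Fin n) (R := K))
          ≤ I.map coeToMvPowerSeries.ringHom := by
    intro h
    obtain ⟨k, hkL⟩ := exists_pow_map_le (algebraMap (MvPolynomial (Fin n) K) (LocX K n))
      notUnit_X_L I h
    exact ⟨k, hkL, map_P_le_of_map_L_le I k hkL⟩
  refine ⟨⟨fun h => ?_, fun h => ?_⟩, fun h => ?_⟩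
  · obtain ⟨k, hkL, hkP⟩ := dirL h
    haveI := finite_quotient I k
    exact Module.Finite.equiv (equivP I k hkP).toLinearEquiv
  · obtain ⟨k, hkP⟩ := exists_pow_map_le (coeToMvPowerSeries.ringHom (σ := Fin n) (R := K))
      notUnit_X_P I h
    have hkL := map_L_le_of_map_P_le I k hkP
    haveI := finite_quotient I k
    exact Module.Finite.equiv (equivL I k hkL).toLinearEquiv
  · obtain ⟨k, hkL, hkP⟩ := dirL h
    calc Module.finrank K (LocX K n ⧸ I.map (algebraMap (MvPolynomial (Fin n) K) (LocX K n)))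
        = Module.finrank K (MvPolynomial (Fin n) K ⧸ (I ⊔ (mxId K n) ^ k)) :=
          ((equivL I k hkL).symm.toLinearEquiv).finrank_eq
      _ = Module.finrank K (MvPowerSeries (Fin n) K ⧸ I.map (coeToMvPowerSeries.ringHom (σ := Fin n) (R := K))) :=
          ((equivP I k hkP).toLinearEquiv).finrank_eq
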